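/- Every rotation of ℝ² about the origin restricts to an isometry of the open unit disk equipped with the metric D(x,y) = ∫₀^π d_I(⟨x,u_θ⟩, ⟨y,u_θ⟩) dθ; that is, for every φ ∈ ℝ and all x,y ∈ D², D(R_φ x, R_φ y) = D(x,y), where R_φ is rotation by angle φ. -/

import Mathlib

open Real MeasureTheory Set

/-- f(t) = t/(1-|t|) -/
noncomputable def f (t : ℝ) : ℝ := t / (1 - |t|)

/-- d_I(s,t) = |f(s) - f(t)| -/
noncomputable def dI (s t : ℝ) : ℝ := |f s - f t|

/-- the unit direction u_θ = (cos θ, sin θ) -/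
noncomputable def u (θ : ℝ) : EuclideanSpace ℝ (Fin 2) := !₂[Real.cos θ, Real.sin θ]

/-- D(x,y) = ∫₀^π d_I(⟨x,u_θ⟩, ⟨y,u_θ⟩) dθ -/
noncomputable def Dmet (x y : EuclideanSpace ℝ (Fin 2)) : ℝ :=
  ∫ θ in (0:ℝ)..π, dI (inner ℝ x (u θ) : ℝ) (inner ℝ y (u θ) : ℝ)

/-- rotation of ℝ² by angle φ about the origin -/
noncomputable def rot (φ : ℝ) (x : EuclideanSpace ℝ (Fin 2)) : EuclideanSpace ℝ (Fin 2) :=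
  !₂[Real.cos φ * x 0 - Real.sin φ * x 1, Real.sin φ * x 0 + Real.cos φ * x 1]

/-! Rotating both points by `φ` shifts the integrand `θ ↦ d_I(⟨x,u_θ⟩, ⟨y,u_θ⟩)` by `φ`.
Since `u_{θ+π} = -u_θ` and `f` is odd, the integrand is `π`-periodic, so its integral over
`[0, π]` equals its integral over any interval of length `π`, in particular over `[-φ, π - φ]`. -/

lemma f_neg (t : ℝ) : f (-t) = -f t := by
  simp only [f, abs_neg, neg_div]

lemma dI_neg (s t : ℝ) : dI (-s) (-t) = dI s t := by
  rw [dI, dI, f_neg, f_neg, neg_sub_neg, abs_sub_comm]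

lemma u_add_pi (θ : ℝ) : u (θ + π) = -u θ := by
  ext i
  fin_cases i <;> simp [u, Real.cos_add_pi, Real.sin_add_pi]

lemma inner_rot_u (φ θ : ℝ) (x : EuclideanSpace ℝ (Fin 2)) :
    inner ℝ (rot φ x) (u θ) = inner ℝ x (u (θ - φ)) := by
  simp only [PiLp.inner_apply, RCLike.inner_apply, conj_trivial, Fin.sum_univ_two, rot, u,
    Matrix.cons_val_zero, Matrix.cons_val_one, Real.cos_sub, Real.sin_sub]
  ring

lemma periodic_dI_inner_u (x y : EuclideanSpace ℝ (Fin 2)) :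
    Function.Periodic (fun θ ↦ dI (inner ℝ x (u θ)) (inner ℝ y (u θ))) π := by
  intro θ
  simp only [u_add_pi, inner_neg_right, dI_neg]

theorem Dmet_rotation_invariant_general (φ : ℝ) (x y : EuclideanSpace ℝ (Fin 2)) :
    Dmet (rot φ x) (rot φ y) = Dmet x y := by
  calc Dmet (rot φ x) (rot φ y)
      = ∫ θ in (0 : ℝ)..π, dI (inner ℝ x (u (θ - φ))) (inner ℝ y (u (θ - φ))) := by
        simp only [Dmet, inner_rot_u]
    _ = ∫ θ in -φ..-φ + π, dI (inner ℝ x (u θ)) (inner ℝ y (u θ)) := by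
        rw [intervalIntegral.integral_comp_sub_right
          (fun θ ↦ dI (inner ℝ x (u θ)) (inner ℝ y (u θ))), zero_sub, sub_eq_neg_add]
    _ = Dmet x y := by
        rw [(periodic_dI_inner_u x y).intervalIntegral_add_eq (-φ) 0, zero_add, Dmet]

theorem Dmet_rotation_invariant (φ : ℝ) (x y : EuclideanSpace ℝ (Fin 2))
    (hx : ‖x‖ < 1) (hy : ‖y‖ < 1) :
    Dmet (rot φ x) (rot φ y) = Dmet x y :=
  Dmet_rotation_invariant_general φ x y
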